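/- If r ≥ 1 and √r < d ≤ r/2 are integers, then β_r(d) > e^{r·H(d/r) − 2(r/d)·ln r}, where H(x) = −x ln x − (1−x) ln(1−x) is the entropy function. Consequently, if d/√r → ∞ and d ≤ r/2, then β_r(d) > C(r,d)^{1+o(1)}. -/

import Mathlib

/-- A subset `C` of `F_2^r` is `d`-complete if through every point `v` there is a
`d`-flat contained in `C ∪ {v}`; i.e. there is a `d`-dimensional subspace `L`
with `v + (L \ {0}) ⊆ C`. -/
def KakeyaComplete (r d : ℕ) (C : Set (Fin r → ZMod 2)) : Prop :=
  ∀ v : Fin r → ZMod 2, ∃ L : Submodule (ZMod 2) (Fin r → ZMod 2),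
    Module.finrank (ZMod 2) L = d ∧ ∀ x ∈ L, x ≠ 0 → v + x ∈ C

/-- `gamma r d` is the smallest size of a `d`-complete subset of `F_2^r`. -/
noncomputable def gamma (r d : ℕ) : ℕ :=
  sInf {n | ∃ C : Finset (Fin r → ZMod 2), C.card = n ∧ KakeyaComplete r d ↑C}

/-- A subset `B` of `F_2^r` is `d`-non-blocking if for every `v` there is a
subspace `L` of dimension `r - d` (codimension `d`) with `(v + (L \ {0})) ∩ B = ∅`. -/
def KakeyaNonBlocking (r d : ℕ) (B : Set (Fin r → ZMod 2)) : Prop :=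
  ∀ v : Fin r → ZMod 2, ∃ L : Submodule (ZMod 2) (Fin r → ZMod 2),
    Module.finrank (ZMod 2) L = r - d ∧ ∀ x ∈ L, x ≠ 0 → v + x ∉ B

/-- `beta r d` is the largest size of a `d`-non-blocking subset of `F_2^r`. -/
noncomputable def beta (r d : ℕ) : ℕ :=
  sSup {n | ∃ B : Finset (Fin r → ZMod 2), B.card = n ∧ KakeyaNonBlocking r d ↑B}

/-!
Split the coordinates into `⌊r/d⌋ + 1` blocks of at most `d` consecutive indices and sort the
`C(r,d)` vectors of weight `d` by their profile, the number of ones in each block. Some profile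
is shared by at least `C(r,d) / (d+1)^(⌊r/d⌋+1)` of them, and the set `B` of all vectors with
that profile is `d`-non-blocking: through a vector `v` with the same profile, the flat
`v + {x | x vanishes on supp v}` contains, besides `v`, only vectors of weight larger than `d`;
through a vector whose count in some block differs, the flat of vectors vanishing on a `d`-set
containing that block keeps that count. Since `e^{r H(d/r)} ≤ (r+1) C(r,d)` (the middle term
is the largest in the expansion of `(d + (r-d))^r`) and `(r+1)(d+1)^(⌊r/d⌋+1) < r^(2r/d)`, the
first bound follows. For the second, `2 (r/d) log r ≤ ε d log(r/d) ≤ ε r H(d/r)` as soon as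
`d ≥ A √r`.
-/

open Finset Real

section Flats

variable {K ι : Type*} [Field K]

def vanishingOn (S : Finset ι) : Submodule K (ι → K) :=
  LinearMap.ker (LinearMap.funLeft K K ((↑) : S → ι))

theorem mem_vanishingOn {S : Finset ι} {x : ι → K} :
    x ∈ vanishingOn S ↔ ∀ i ∈ S, x i = 0 := by
  simp [vanishingOn, funext_iff, LinearMap.funLeft]

theorem finrank_vanishingOn [Fintype ι] (S : Finset ι) :
    Module.finrank K (vanishingOn (K := K) S) = Fintype.card ι - #S := by
  have h := LinearMap.finrank_range_add_finrank_ker (LinearMap.funLeft K K ((↑) : S → ι))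
  rw [LinearMap.range_eq_top.2 (LinearMap.funLeft_surjective_of_injective _ _ _
      Subtype.val_injective), finrank_top, Module.finrank_fintype_fun_eq_card,
    Module.finrank_fintype_fun_eq_card, Fintype.card_coe] at h
  rw [vanishingOn]
  omega

end Flats

section Weights

variable {K ι κ : Type*} [Field K] [DecidableEq K] [Fintype ι] [DecidableEq κ]

theorem hammingNorm_lt_hammingNorm_add {v x : ι → K} (hx : ∀ i, v i ≠ 0 → x i = 0)
    (hx0 : x ≠ 0) : hammingNorm v < hammingNorm (v + x) := by
  obtain ⟨j, hj⟩ : ∃ j, x j ≠ 0 := Function.ne_iff.1 hx0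
  refine card_lt_card ((ssubset_iff_of_subset fun i hi => ?_).2 ⟨j, ?_, ?_⟩)
  · simp only [mem_filter, mem_univ, true_and, Pi.add_apply] at hi ⊢
    rwa [hx i hi, add_zero]
  · have hvj : v j = 0 := by_contra fun h => hj (hx j h)
    simpa [hvj] using hj
  · simpa using fun h => hj (hx j h)

def blockWeight (f : ι → κ) (u : ι → K) (j : κ) : ℕ := #{i | f i = j ∧ u i ≠ 0}

theorem blockWeight_le_hammingNorm (f : ι → κ) (u : ι → K) (j : κ) :
    blockWeight f u j ≤ hammingNorm u :=
  card_le_card fun _ hi => by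
    simp only [mem_filter] at hi ⊢
    exact ⟨hi.1, hi.2.2⟩

theorem sum_blockWeight [Fintype κ] (f : ι → κ) (u : ι → K) :
    ∑ j, blockWeight f u j = hammingNorm u := by
  rw [hammingNorm, card_eq_sum_card_fiberwise (f := f) (t := univ) fun _ _ => mem_univ _]
  simp only [blockWeight, filter_filter, and_comm]

theorem blockWeight_add_of_vanishing {f : ι → κ} {v x : ι → K} {j : κ}
    (hx : ∀ i, f i = j → x i = 0) : blockWeight f (v + x) j = blockWeight f v j := by
  refine congrArg card (filter_congr fun i _ => ?_)
  constructor <;> rintro ⟨hi, h⟩ <;> simp_all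

end Weights

theorem card_hammingNorm_eq (ι : Type*) [Fintype ι] [DecidableEq ι] (d : ℕ) :
    #{u : ι → ZMod 2 | hammingNorm u = d} = (Fintype.card ι).choose d := by
  have indicator_support (s : Finset ι) :
      ({i | (if i ∈ s then 1 else 0 : ZMod 2) ≠ 0} : Finset ι) = s := by
    ext i; by_cases h : i ∈ s <;> simp [h]
  rw [← card_univ, ← card_powersetCard]
  refine card_nbij' (fun u => ({i | u i ≠ 0} : Finset ι)) (fun s i => if i ∈ s then 1 else 0)
    (fun u hu => by simpa [hammingNorm] using hu)
    (fun s hs => by simpa [hammingNorm, indicator_support] using hs)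
    (fun u _ => funext fun i => ?_) (fun s _ => indicator_support s)
  have h01 : ∀ a : ZMod 2, a ≠ 0 → a = 1 := by decide
  by_cases h : u i = 0
  · simp [h]
  · simp [h01 _ h]

section Construction

variable {κ : Type*} [Fintype κ] [DecidableEq κ]

theorem kakeyaNonBlocking_blockWeight_eq {r d : ℕ} (hdr : d ≤ r) {f : Fin r → κ}
    (hf : ∀ j, #{i | f i = j} ≤ d) {y : κ → ℕ} (hy : ∑ j, y j = d) :
    KakeyaNonBlocking r d {u | blockWeight f u = y} := by
  intro v
  by_cases hv : blockWeight f v = y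
  · have hwt : hammingNorm v = d := by rw [← sum_blockWeight f, hv, hy]
    refine ⟨vanishingOn {i | v i ≠ 0}, ?_, fun x hx hx0 hvx => ?_⟩
    · rw [finrank_vanishingOn, Fintype.card_fin, ← hwt, hammingNorm]
    have hlt := hammingNorm_lt_hammingNorm_add
      (fun i hi => mem_vanishingOn.1 hx i (by simpa using hi)) hx0
    have hwt' := sum_blockWeight f (v + x)
    rw [show blockWeight f (v + x) = y from hvx, hy] at hwt'
    omega
  · obtain ⟨j, hj⟩ := Function.ne_iff.1 hv
    obtain ⟨S, hblock, hS⟩ := exists_superset_card_eq (hf j) (by simpa using hdr)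
    refine ⟨vanishingOn S, by rw [finrank_vanishingOn, Fintype.card_fin, hS],
      fun x hx _ hvx => hj ?_⟩
    rw [← blockWeight_add_of_vanishing (x := x)
      fun i hi => mem_vanishingOn.1 hx i (hblock (by simpa using hi))]
    exact congrFun hvx j

theorem exists_choose_le_card_blockWeight_eq {r d : ℕ} (hdr : d ≤ r) (f : Fin r → κ) :
    ∃ y : κ → ℕ, ∑ j, y j = d ∧
      (r.choose d : ℝ) ≤
        (d + 1) ^ Fintype.card κ * #{u : Fin r → ZMod 2 | blockWeight f u = y} := by
  set slice : Finset (Fin r → ZMod 2) := {u | hammingNorm u = d}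
  have hmaps : ∀ u ∈ slice, blockWeight f u ∈ Fintype.piFinset fun _ : κ => range (d + 1) :=
    fun u hu => Fintype.mem_piFinset.2 fun j => mem_range_succ_iff.2 <|
      (mem_filter.1 hu).2 ▸ blockWeight_le_hammingNorm f u j
  have hpow : (0 : ℝ) < (d + 1) ^ Fintype.card κ := by positivity
  obtain ⟨y, -, hy⟩ := exists_le_card_fiber_of_nsmul_le_card_of_maps_to hmaps
    (Fintype.piFinset_nonempty.2 fun _ => ⟨0, by simp⟩)
    (b := (r.choose d : ℝ) / (d + 1) ^ Fintype.card κ) (by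
      rw [Fintype.card_piFinset, prod_const, card_range, card_univ, nsmul_eq_mul,
        card_hammingNorm_eq, Fintype.card_fin]
      push_cast
      rw [mul_div_cancel₀ _ hpow.ne'])
  have hne : ({u ∈ slice | blockWeight f u = y} : Finset _).Nonempty := by
    rw [← card_pos, ← Nat.cast_pos (α := ℝ)]
    exact (div_pos (by exact_mod_cast Nat.choose_pos hdr) hpow).trans_le hy
  obtain ⟨u, hu⟩ := hne
  rw [mem_filter, mem_filter] at hu
  refine ⟨y, by rw [← hu.2, sum_blockWeight, hu.1.2], ?_⟩
  rw [← div_le_iff₀' hpow]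
  exact hy.trans (by exact_mod_cast card_le_card (monotone_filter_left _ (subset_univ _)))

end Construction

theorem card_le_beta {r d : ℕ} {B : Finset (Fin r → ZMod 2)} (hB : KakeyaNonBlocking r d ↑B) :
    #B ≤ beta r d :=
  le_csSup ⟨2 ^ r, by rintro n ⟨B', rfl, -⟩; simpa using card_le_univ B'⟩ ⟨B, rfl, hB⟩

theorem card_div_eq_le {r d : ℕ} (hd : 0 < d) (j : ℕ) :
    #{i : Fin r | (i : ℕ) / d = j} ≤ d := by
  have hmaps : ∀ i ∈ ({i : Fin r | (i : ℕ) / d = j} : Finset _),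
      (i : ℕ) ∈ Ico (j * d) (j * d + d) := by
    intro i hi
    rw [mem_filter] at hi
    rw [mem_Ico, ← hi.2]
    exact ⟨Nat.div_mul_le_self _ _, Nat.lt_div_mul_add hd⟩
  simpa using card_le_card_of_injOn _ hmaps Fin.val_injective.injOn

theorem choose_le_pow_mul_beta {r d : ℕ} (hd : 0 < d) (hdr : d ≤ r) :
    (r.choose d : ℝ) ≤ (d + 1) ^ (r / d + 1) * beta r d := by
  let f : Fin r → Fin (r / d + 1) := fun i =>
    ⟨i / d, Nat.lt_succ_of_le (Nat.div_le_div_right i.2.le)⟩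
  obtain ⟨y, hy, hcard⟩ := exists_choose_le_card_blockWeight_eq hdr f
  have hB := kakeyaNonBlocking_blockWeight_eq hdr (f := f)
    (fun j => by simpa [f, Fin.ext_iff] using card_div_eq_le (r := r) hd j) hy
  rw [Fintype.card_fin] at hcard
  refine hcard.trans (mul_le_mul_of_nonneg_left ?_ (by positivity))
  exact_mod_cast card_le_beta (by simpa using hB)

section BinomialTerms

def binomTerm (n k i : ℕ) : ℕ := n.choose i * k ^ i * (n - k) ^ (n - i)

theorem sum_binomTerm {n k : ℕ} (hk : k ≤ n) :
    ∑ i ∈ range (n + 1), binomTerm n k i = n ^ n := by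
  conv_rhs => rw [← Nat.add_sub_cancel' hk, add_pow, Nat.add_sub_cancel' hk]
  exact sum_congr rfl fun i _ => by rw [binomTerm, Nat.cast_id]; ring

theorem binomTerm_succ_le {n k i : ℕ} (hki : k ≤ i) :
    binomTerm n k (i + 1) ≤ binomTerm n k i := by
  rcases lt_or_ge i n with hin | hin
  · refine Nat.le_of_mul_le_mul_right ?_ i.succ_pos
    have hpow : (n - k) ^ (n - i) = (n - k) ^ (n - (i + 1)) * (n - k) := by
      rw [← pow_succ]; congr 1; omega
    calc binomTerm n k (i + 1) * (i + 1)
        = n.choose (i + 1) * (i + 1) * k * (k ^ i * (n - k) ^ (n - (i + 1))) := by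
          rw [binomTerm]; ring
      _ = n.choose i * ((n - i) * k) * (k ^ i * (n - k) ^ (n - (i + 1))) := by
          rw [Nat.choose_succ_right_eq]; ring
      _ ≤ n.choose i * ((n - k) * (i + 1)) * (k ^ i * (n - k) ^ (n - (i + 1))) := by
          gcongr; omega
      _ = binomTerm n k i * (i + 1) := by rw [binomTerm, hpow]; ring
  · simp [binomTerm, Nat.choose_eq_zero_of_lt (Nat.lt_succ_of_le hin)]

theorem binomTerm_sub_sub {n k i : ℕ} (hk : k ≤ n) (hi : i ≤ n) :
    binomTerm n (n - k) (n - i) = binomTerm n k i := by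
  rw [binomTerm, binomTerm, Nat.choose_symm hi, Nat.sub_sub_self hk, Nat.sub_sub_self hi]
  ring

theorem binomTerm_le_binomTerm_self {n k : ℕ} (hk : k ≤ n) (i : ℕ) :
    binomTerm n k i ≤ binomTerm n k k := by
  have of_le {k i : ℕ} (hki : k ≤ i) : binomTerm n k i ≤ binomTerm n k k :=
    Nat.rel_of_forall_rel_succ_of_le_of_le (· ≥ ·) (fun _ h => binomTerm_succ_le h) le_rfl hki
  rcases le_or_gt k i with hki | hik
  · exact of_le hki
  · rw [← binomTerm_sub_sub hk (by omega), ← binomTerm_sub_sub hk hk]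
    exact of_le (by omega)

theorem binomTerm_self_le {n k : ℕ} (hk : k ≤ n) : binomTerm n k k ≤ n ^ n :=
  sum_binomTerm hk ▸ single_le_sum (fun _ _ => Nat.zero_le _) (mem_range_succ_iff.2 hk)

theorem pow_le_succ_mul_binomTerm_self {n k : ℕ} (hk : k ≤ n) :
    n ^ n ≤ (n + 1) * binomTerm n k k := by
  simpa [sum_binomTerm hk] using
    sum_le_card_nsmul (range (n + 1)) _ _ fun i _ => binomTerm_le_binomTerm_self hk i

end BinomialTerms

section Entropy

theorem binEntropy_eq_neg_mul_log_sub (p : ℝ) :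
    binEntropy p = -p * log p - (1 - p) * log (1 - p) := by
  rw [binEntropy_eq_negMulLog_add_negMulLog_one_sub, negMulLog, negMulLog]
  ring

theorem mul_binEntropy_div {x n : ℝ} (hx : 0 < x) (hxn : x < n) :
    n * binEntropy (x / n) = n * log n - x * log x - (n - x) * log (n - x) := by
  have hn : 0 < n := hx.trans hxn
  have hnx : 0 < n - x := sub_pos.2 hxn
  rw [binEntropy_eq_neg_mul_log_sub, show 1 - x / n = (n - x) / n by field_simp,
    log_div hx.ne' hn.ne', log_div hnx.ne' hn.ne']
  field_simp
  ring

theorem mul_log_div_le_mul_binEntropy {x n : ℝ} (hx : 0 < x) (hxn : x ≤ n) :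
    x * log (n / x) ≤ n * binEntropy (x / n) := by
  have hn : 0 < n := hx.trans_le hxn
  have hfirst : n * negMulLog (x / n) = x * log (n / x) := by
    rw [negMulLog, ← inv_div, log_inv]
    field_simp
  have hsecond : 0 ≤ negMulLog (1 - x / n) :=
    negMulLog_nonneg (sub_nonneg.2 ((div_le_one hn).2 hxn)) (by linarith [div_pos hx hn])
  rw [binEntropy_eq_negMulLog_add_negMulLog_one_sub, mul_add, hfirst]
  linarith [mul_nonneg hn.le hsecond]

theorem exp_mul_binEntropy_mul {n k : ℕ} (hk : 0 < k) (hkn : k < n) :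
    exp (n * binEntropy (k / n)) * (k ^ k * ((n - k : ℕ) : ℝ) ^ (n - k)) = (n : ℝ) ^ n := by
  have hk' : (0 : ℝ) < k := by exact_mod_cast hk
  have hn : (0 : ℝ) < n := by exact_mod_cast hk.trans hkn
  have hnk : (0 : ℝ) < ((n - k : ℕ) : ℝ) := by exact_mod_cast Nat.sub_pos_of_lt hkn
  rw [← exp_log (by positivity : (0 : ℝ) < k ^ k * ((n - k : ℕ) : ℝ) ^ (n - k)),
    ← exp_add, ← exp_log (by positivity : (0 : ℝ) < (n : ℝ) ^ n)]
  congr 1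
  rw [log_mul (by positivity) (by positivity), log_pow, log_pow, log_pow,
    mul_binEntropy_div hk' (by exact_mod_cast hkn), Nat.cast_sub hkn.le]
  ring

theorem choose_le_exp_mul_binEntropy {n k : ℕ} (hk : 0 < k) (hkn : k < n) :
    (n.choose k : ℝ) ≤ exp (n * binEntropy (k / n)) := by
  have hP : (0 : ℝ) < k ^ k * ((n - k : ℕ) : ℝ) ^ (n - k) := by
    have : (0 : ℝ) < ((n - k : ℕ) : ℝ) := by exact_mod_cast Nat.sub_pos_of_lt hkn
    positivity
  refine le_of_mul_le_mul_right ?_ hP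
  rw [exp_mul_binEntropy_mul hk hkn]
  calc (n.choose k : ℝ) * (k ^ k * ((n - k : ℕ) : ℝ) ^ (n - k))
      = (binomTerm n k k : ℕ) := by
        rw [binomTerm]; push_cast; ring
    _ ≤ (n : ℝ) ^ n := by exact_mod_cast binomTerm_self_le hkn.le

theorem exp_mul_binEntropy_le_succ_mul_choose {n k : ℕ} (hk : 0 < k) (hkn : k < n) :
    exp (n * binEntropy (k / n)) ≤ (n + 1) * n.choose k := by
  have hP : (0 : ℝ) < k ^ k * ((n - k : ℕ) : ℝ) ^ (n - k) := by
    have : (0 : ℝ) < ((n - k : ℕ) : ℝ) := by exact_mod_cast Nat.sub_pos_of_lt hkn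
    positivity
  refine le_of_mul_le_mul_right ?_ hP
  rw [exp_mul_binEntropy_mul hk hkn]
  calc (n : ℝ) ^ n ≤ ((n + 1) * binomTerm n k k : ℕ) := by
        exact_mod_cast pow_le_succ_mul_binomTerm_self hkn.le
    _ = (n + 1) * n.choose k * (k ^ k * ((n - k : ℕ) : ℝ) ^ (n - k)) := by
        rw [binomTerm]; push_cast; ring

end Entropy

theorem succ_mul_succ_pow_lt_pow {r d : ℕ} (hd : 3 ≤ d) (hdr : 2 * d ≤ r) :
    ((r : ℝ) + 1) * ((d : ℝ) + 1) ^ (r / d + 1) < (r : ℝ) ^ (r / d + 2) := by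
  have hk : 1 ≤ r / d := (Nat.le_div_iff_mul_le (by omega)).2 (by omega)
  have hR : (1 : ℝ) ≤ r := by exact_mod_cast (by omega : 1 ≤ r)
  have hd1 : (d : ℝ) + 1 ≤ 2 / 3 * r := by
    have : (3 * (d + 1) : ℝ) ≤ 2 * r := by exact_mod_cast (by omega : 3 * (d + 1) ≤ 2 * r)
    linarith
  have htwo_thirds : (2 / 3 : ℝ) ^ (r / d + 1) ≤ (2 / 3) ^ 2 :=
    pow_le_pow_of_le_one (by norm_num) (by norm_num) (by omega)
  calc ((r : ℝ) + 1) * ((d : ℝ) + 1) ^ (r / d + 1)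
      ≤ 2 * r * (2 / 3 * r) ^ (r / d + 1) := by gcongr; linarith
    _ = 2 * (2 / 3) ^ (r / d + 1) * (r : ℝ) ^ (r / d + 2) := by ring
    _ ≤ 2 * (2 / 3) ^ 2 * (r : ℝ) ^ (r / d + 2) := by gcongr
    _ < (r : ℝ) ^ (r / d + 2) := by linarith [pow_pos (zero_lt_one.trans_le hR) (r / d + 2)]

theorem pow_le_exp_two_mul_div_mul_log {r d : ℕ} (hd : 0 < d) (hdr : 2 * d ≤ r) :
    (r : ℝ) ^ (r / d + 2) ≤ exp (2 * ((r : ℝ) / d) * log r) := by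
  have hR : (0 : ℝ) < r := by exact_mod_cast (by omega : 0 < r)
  have hD : (0 : ℝ) < d := by exact_mod_cast hd
  rw [← exp_log (pow_pos hR _), log_pow]
  have hr1 : (1 : ℝ) ≤ r := by exact_mod_cast (by omega : 1 ≤ r)
  refine exp_le_exp.2 (mul_le_mul_of_nonneg_right ?_ (log_nonneg hr1))
  have : (r / d + 2) * d ≤ 2 * r := by rw [add_mul]; linarith [Nat.div_mul_le_self r d]
  rw [mul_div_assoc', le_div_iff₀ hD]
  exact_mod_cast this

theorem exp_mul_binEntropy_sub_lt_beta {r d : ℕ} (hd : 3 ≤ d) (hdr : 2 * d ≤ r) :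
    exp (r * binEntropy (d / r) - 2 * ((r : ℝ) / d) * log r) < beta r d := by
  have hblocks : 0 < ((r : ℝ) + 1) * ((d : ℝ) + 1) ^ (r / d + 1) := by positivity
  calc exp (r * binEntropy (d / r) - 2 * ((r : ℝ) / d) * log r)
      = exp (r * binEntropy (d / r)) / exp (2 * ((r : ℝ) / d) * log r) := exp_sub _ _
    _ < exp (r * binEntropy (d / r)) / (((r : ℝ) + 1) * ((d : ℝ) + 1) ^ (r / d + 1)) :=
        div_lt_div_of_pos_left (exp_pos _) hblocks <| (succ_mul_succ_pow_lt_pow hd hdr).trans_le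
          (pow_le_exp_two_mul_div_mul_log (by omega) hdr)
    _ ≤ beta r d := by
        rw [div_le_iff₀ hblocks]
        calc exp (r * binEntropy (d / r)) ≤ (r + 1) * r.choose d :=
              exp_mul_binEntropy_le_succ_mul_choose (by omega) (by omega)
          _ ≤ (r + 1) * ((d + 1) ^ (r / d + 1) * beta r d) := by
              gcongr; exact choose_le_pow_mul_beta (by omega) (by omega)
          _ = beta r d * (((r : ℝ) + 1) * ((d : ℝ) + 1) ^ (r / d + 1)) := by ring

-- Put `r = t ^ 4`. If `d ≤ r ^ (3/4)`, then `log (r / d) ≥ log t` and `d ^ 2 ≥ A ^ 2 r`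
-- suffices; otherwise `d ^ 2 ≥ r ^ (3/2)` and `log t ≤ t` suffice.
theorem eight_mul_pow_four_mul_log_le {ε A t d : ℝ} (hA0 : 0 ≤ A) (hA : 8 ≤ ε * A ^ 2)
    (ht : 16 ≤ ε * t) (hd : 0 < d) (hdt : 2 * d ≤ t ^ 4) (hAd : A * t ^ 2 ≤ d) :
    8 * t ^ 4 * log t ≤ ε * d ^ 2 * log (t ^ 4 / d) := by
  have hε : 0 < ε := by nlinarith [sq_nonneg A]
  have ht0 : 0 < t := by nlinarith
  have hL : 1 / 2 ≤ log (t ^ 4 / d) := by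
    have : log 2 ≤ log (t ^ 4 / d) := log_le_log two_pos ((le_div_iff₀ hd).2 (by linarith))
    linarith [log_two_gt_d9]
  rcases le_or_gt d (t ^ 3) with hsmall | hlarge
  · have hlogt : log t ≤ log (t ^ 4 / d) := by
      have := log_le_log hd hsmall
      rw [log_pow] at this
      rw [log_div (by positivity) hd.ne', log_pow]
      push_cast at this ⊢
      linarith
    calc 8 * t ^ 4 * log t ≤ 8 * t ^ 4 * log (t ^ 4 / d) :=
          mul_le_mul_of_nonneg_left hlogt (by positivity)
      _ ≤ ε * (A * t ^ 2) ^ 2 * log (t ^ 4 / d) := by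
          refine mul_le_mul_of_nonneg_right ?_ (by linarith)
          nlinarith [mul_le_mul_of_nonneg_right hA (pow_pos ht0 4).le]
      _ ≤ ε * d ^ 2 * log (t ^ 4 / d) := by gcongr
  · have hd2 : t ^ 6 ≤ d ^ 2 := by nlinarith [pow_pos ht0 3]
    calc 8 * t ^ 4 * log t ≤ 8 * t ^ 4 * t := by gcongr; exact log_le_self ht0.le
      _ ≤ ε * t ^ 6 * (1 / 2) := by nlinarith [pow_pos ht0 5]
      _ ≤ ε * d ^ 2 * log (t ^ 4 / d) := by gcongr

theorem two_mul_div_mul_log_le_mul_binEntropy {ε r d : ℝ} (hε : 0 < ε) (hε1 : ε ≤ 1)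
    (hd : 0 < d) (hdr : 2 * d ≤ r) (hAd : 128 / ε ^ 2 * √r ≤ d) :
    2 * (r / d) * log r ≤ ε * (r * binEntropy (d / r)) := by
  set t := √(√r)
  have hr : 0 < r := by linarith
  have ht2 : t ^ 2 = √r := sq_sqrt (sqrt_nonneg _)
  have ht4 : t ^ 4 = r := by rw [show t ^ 4 = (t ^ 2) ^ 2 by ring, ht2, sq_sqrt hr.le]
  have hA : 8 ≤ ε * (128 / ε ^ 2) ^ 2 := by
    rw [show ε * (128 / ε ^ 2) ^ 2 = 16384 / ε ^ 3 by field_simp; ring,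
      le_div_iff₀ (by positivity)]
    nlinarith [pow_le_one₀ hε.le hε1 (n := 3)]
  have ht : 16 ≤ ε * t := by
    have hsqrt : 2 * (128 / ε ^ 2) ≤ √r := by
      refine le_of_mul_le_mul_right (a := √r) ?_ (sqrt_pos.2 hr)
      rw [mul_self_sqrt hr.le]
      linarith
    have : 256 ≤ (ε * t) ^ 2 := by
      rw [mul_pow, ht2]
      calc (256 : ℝ) = ε ^ 2 * (2 * (128 / ε ^ 2)) := by field_simp; ring
        _ ≤ ε ^ 2 * √r := by gcongr
    nlinarith [mul_pos hε (sqrt_pos.2 (sqrt_pos.2 hr))]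
  have hcore := eight_mul_pow_four_mul_log_le (by positivity) hA ht hd (by rwa [ht4])
    (by rwa [ht2])
  rw [ht4] at hcore
  have hlogr : log r = 4 * log t := by rw [← ht4, log_pow]; norm_num
  calc 2 * (r / d) * log r = 8 * r * log t / d := by rw [hlogr]; ring
    _ ≤ ε * d ^ 2 * log (r / d) / d := by gcongr
    _ = ε * (d * log (r / d)) := by field_simp
    _ ≤ ε * (r * binEntropy (d / r)) :=
        mul_le_mul_of_nonneg_left (mul_log_div_le_mul_binEntropy hd (by linarith)) hε.le

theorem exists_choose_rpow_lt_beta {ε : ℝ} (hε : 0 < ε) :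
    ∃ A : ℝ, ∀ r d : ℕ, 1 ≤ r → 2 * d ≤ r → A * √r ≤ d →
      (r.choose d : ℝ) ^ (1 - ε) < beta r d := by
  set ε' := min ε 1
  have hε' : 0 < ε' := lt_min hε one_pos
  refine ⟨128 / ε' ^ 2, fun r d hr hdr hAd => ?_⟩
  have hd : 3 ≤ d := by
    have hA : (128 : ℝ) ≤ 128 / ε' ^ 2 :=
      le_div_self (by norm_num) (by positivity) (pow_le_one₀ hε'.le (min_le_right _ _))
    have hsqrt : (1 : ℝ) ≤ √r := one_le_sqrt.2 (by exact_mod_cast hr)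
    have : (3 : ℝ) ≤ d := by nlinarith
    exact_mod_cast this
  have hC : (1 : ℝ) ≤ r.choose d := by exact_mod_cast Nat.choose_pos (by omega)
  have hE := two_mul_div_mul_log_le_mul_binEntropy hε' (min_le_right _ _)
    (by positivity) (by exact_mod_cast hdr) hAd
  calc (r.choose d : ℝ) ^ (1 - ε) ≤ (r.choose d : ℝ) ^ (1 - ε') :=
        rpow_le_rpow_of_exponent_le hC (by linarith [min_le_left ε 1])
    _ ≤ exp (r * binEntropy (d / r)) ^ (1 - ε') :=
        rpow_le_rpow (by positivity) (choose_le_exp_mul_binEntropy (by omega) (by omega))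
          (sub_nonneg.2 (min_le_right _ _))
    _ = exp ((1 - ε') * (r * binEntropy (d / r))) := by rw [← exp_mul, mul_comm]
    _ ≤ exp (r * binEntropy (d / r) - 2 * ((r : ℝ) / d) * log r) := exp_le_exp.2 (by linarith)
    _ < beta r d := exp_mul_binEntropy_sub_lt_beta hd hdr

theorem three_le_of_sqrt_lt {r d : ℕ} (hd : √(r : ℝ) < d) (hdr : 2 * d ≤ r) : 3 ≤ d := by
  have : r < d ^ 2 := by exact_mod_cast (sqrt_lt' (by linarith [sqrt_nonneg (r : ℝ)])).1 hd
  nlinarith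

theorem beta_entropy_lower_general (r d : ℕ)
    (hd₁ : Real.sqrt r < d) (hd₂ : 2 * d ≤ r) :
    (Real.exp ((r : ℝ) *
        (-(((d : ℝ) / r)) * Real.log ((d : ℝ) / r) -
          (1 - (d : ℝ) / r) * Real.log (1 - (d : ℝ) / r)) -
      2 * ((r : ℝ) / d) * Real.log r) < (beta r d : ℝ)) ∧
    ∀ ε : ℝ, 0 < ε → ∃ A : ℝ, ∀ r' d' : ℕ, 1 ≤ r' → 2 * d' ≤ r' →
      A * Real.sqrt r' ≤ (d' : ℝ) →
      ((r'.choose d' : ℝ)) ^ (1 - ε) < (beta r' d' : ℝ) := by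
  rw [← binEntropy_eq_neg_mul_log_sub]
  exact ⟨exp_mul_binEntropy_sub_lt_beta (three_le_of_sqrt_lt hd₁ hd₂) hd₂,
    fun ε hε => exists_choose_rpow_lt_beta hε⟩

theorem beta_entropy_lower (r d : ℕ) (hr : 1 ≤ r)
    (hd₁ : Real.sqrt r < d) (hd₂ : 2 * d ≤ r) :
    (Real.exp ((r : ℝ) *
        (-(((d : ℝ) / r)) * Real.log ((d : ℝ) / r) -
          (1 - (d : ℝ) / r) * Real.log (1 - (d : ℝ) / r)) -
      2 * ((r : ℝ) / d) * Real.log r) < (beta r d : ℝ)) ∧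
    ∀ ε : ℝ, 0 < ε → ∃ A : ℝ, ∀ r' d' : ℕ, 1 ≤ r' → 2 * d' ≤ r' →
      A * Real.sqrt r' ≤ (d' : ℝ) →
      ((r'.choose d' : ℝ)) ^ (1 - ε) < (beta r' d' : ℝ) :=
  beta_entropy_lower_general r d hd₁ hd₂
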